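/- arXiv:1306.6223 — 4 statements merged into one kernel-verified Lean document; each statement's English description precedes it below -/
import Mathlib

section
/- Let t₀ > 0 and let λ̂ : (t₀,∞) → ℝ be a differentiable function satisfying ∂ₜλ̂(t) ≥ (3/t)(1 - e^{λ̂(t)/2}) for all t > t₀. Then for every ε > 0 there exists T > t₀ such that λ̂(t) ≥ -ε for all t ≥ T. -/
/-!
Below the level `-ε` the inequality gives `λ̂' ≥ c / t` with `c = 3 (1 - e^{-ε/2}) > 0`, so
`λ̂ - c log t` is nondecreasing there; as `log t` is unbounded, `λ̂` cannot stay below `-ε`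
forever. Once `λ̂` reaches `-ε` it never falls below again, since `λ̂' > 0` at that level.
-/

open Filter Set

theorem le_apply_of_deriv_pos_at_level {f : ℝ → ℝ} {a m : ℝ}
    (hf : ∀ t ≥ a, DifferentiableAt ℝ f t) (hm : ∀ t ≥ a, f t = m → 0 < deriv f t)
    (ha : m ≤ f a) : ∀ t ≥ a, m ≤ f t := by
  intro t ht
  have hneg : ∀ x ∈ Ici a, HasDerivAt (-f) (-deriv f x) x := fun x hx =>
    (hf x hx).hasDerivAt.neg
  have := image_le_of_deriv_right_lt_deriv_boundary (a := a) (b := t) (f := -f)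
    (B := fun _ => -m) (B' := 0)
    (fun x hx => (hneg x hx.1).continuousAt.continuousWithinAt)
    (fun x hx => (hneg x hx.1).hasDerivWithinAt) (by simpa using ha)
    (fun _ => hasDerivAt_const _ _)
    (fun x hx hx' => by simpa using hm x hx.1 (neg_inj.mp hx')) ⟨ht, le_rfl⟩
  simpa using this

theorem exists_le_apply_of_div_le_deriv {f : ℝ → ℝ} {a c m : ℝ} (ha : 0 ≤ a) (hc : 0 < c)
    (hf : ∀ t > a, DifferentiableAt ℝ f t) (hderiv : ∀ t > a, f t < m → c / t ≤ deriv f t) :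
    ∃ t > a, m ≤ f t := by
  by_contra! hlt
  set g : ℝ → ℝ := fun t => f t - c * Real.log t
  have hg : ∀ t > a, HasDerivAt g (deriv f t - c * t⁻¹) t := fun t ht =>
    (hf t ht).hasDerivAt.sub ((Real.hasDerivAt_log (by linarith)).const_mul c)
  have hmono : MonotoneOn g (Ici (a + 1)) := by
    refine monotoneOn_of_deriv_nonneg (convex_Ici _)
      (fun t ht => (hg t (by rw [mem_Ici] at ht; linarith)).continuousAt.continuousWithinAt)
      (fun t ht => (hg t ?_).differentiableAt.differentiableWithinAt) (fun t ht => ?_)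
    all_goals rw [interior_Ici, mem_Ioi] at ht
    · linarith
    have hta : t > a := by linarith
    rw [(hg t hta).deriv, ← div_eq_mul_inv]
    linarith [hderiv t hta (hlt t hta)]
  have hgrow : Tendsto (fun t => g (a + 1) + c * Real.log t) atTop atTop :=
    tendsto_atTop_add_const_left _ _ (Real.tendsto_log_atTop.const_mul_atTop hc)
  obtain ⟨t, hmt, hat⟩ :=
    ((hgrow.eventually_gt_atTop m).and (eventually_ge_atTop (a + 1))).exists
  have hgt : g (a + 1) ≤ f t - c * Real.log t := hmono self_mem_Ici hat hat
  linarith [hlt t (by linarith)]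

theorem stmt1_general (t₀ : ℝ) (lam : ℝ → ℝ)
    (hdiff : ∀ t, t₀ < t → DifferentiableAt ℝ lam t)
    (hderiv : ∀ t, t₀ < t → (3 / t) * (1 - Real.exp (lam t / 2)) ≤ deriv lam t) :
    ∀ ε > 0, ∃ T > t₀, ∀ t, T ≤ t → -ε ≤ lam t := by
  intro ε hε
  set a := max t₀ 0
  set c := 3 * (1 - Real.exp (-ε / 2))
  have hc : 0 < c := by
    have : Real.exp (-ε / 2) < 1 := Real.exp_lt_one_iff.mpr (by linarith)
    linarith
  have hta : ∀ {t}, a < t → t₀ < t := fun ht => (le_max_left _ _).trans_lt ht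
  have key : ∀ t > a, lam t ≤ -ε → c / t ≤ deriv lam t := by
    intro t ht hle
    have htpos : 0 < t := (le_max_right _ _).trans_lt ht
    calc c / t = 3 / t * (1 - Real.exp (-ε / 2)) := by ring
      _ ≤ 3 / t * (1 - Real.exp (lam t / 2)) := by gcongr
      _ ≤ deriv lam t := hderiv t (hta ht)
  obtain ⟨t₁, ht₁, hle₁⟩ := exists_le_apply_of_div_le_deriv (le_max_right _ _) hc
    (fun t ht => hdiff t (hta ht)) (fun t ht hlt => key t ht hlt.le)
  refine ⟨t₁, hta ht₁, fun t ht => ?_⟩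
  refine le_apply_of_deriv_pos_at_level (fun s hs => hdiff s (hta (ht₁.trans_le hs)))
    (fun s hs heq => ?_) hle₁ t ht
  have hs : a < s := ht₁.trans_le hs
  exact (div_pos hc ((le_max_right _ _).trans_lt hs)).trans_le (key s hs heq.le)

/-- ODE comparison: if `∂ₜ λ̂ ≥ (3/t)(1 - e^{λ̂/2})` on `(t₀,∞)`, then for every
`ε > 0` there is `T > t₀` with `λ̂(t) ≥ -ε` for all `t ≥ T`. -/
theorem stmt1 (t₀ : ℝ) (ht₀ : 0 < t₀) (lam : ℝ → ℝ)
    (hdiff : ∀ t, t₀ < t → DifferentiableAt ℝ lam t)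
    (hderiv : ∀ t, t₀ < t → (3 / t) * (1 - Real.exp (lam t / 2)) ≤ deriv lam t) :
    ∀ ε > 0, ∃ T > t₀, ∀ t, T ≤ t → -ε ≤ lam t :=
  stmt1_general t₀ lam hdiff hderiv
end

section
/- Consider on [t₁, t] (with t₁ ≥ 2) the linear system dΨ̂/ds = (2/(s ln s)) Ψ̂ + a(s) Ψ̂ + b(s) Ẑ, dẐ/ds = c(s) Ψ̂ + d(s) Ẑ, where |a(s)| ≤ C s^{-2}, |b(s)| ≤ C s^{-2}(ln s)², |c(s)| ≤ C s^{-1}(ln s)^{-2}, |d(s)| ≤ C s^{-3/2}. Then there is a constant C' depending only on C and t₁ (not on t) such that Ψ̂(s)² + Ẑ(s)² ≤ C' (Ψ̂(t)² + Ẑ(t)²) for all s ∈ [t₁, t]. -/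
/-!
Along the system the energy `E = Ψ̂² + Ẑ²` satisfies `E' ≥ -K (s^{-3/2} + 1/(s (ln s)²)) E`
with `K = 20 C`: the term `(4/(s ln s)) Ψ̂²` is nonnegative, and the cross terms are absorbed by
`2|Ψ̂ Ẑ| ≤ Ψ̂² + Ẑ²` after `(ln s)² ≤ 16 √s` turns `|b|` into an `s^{-3/2}` bound. The rate is
the derivative of `-(2 s^{-1/2} + 1/ln s)`, which stays in `[-4, 0]` on `[2, ∞)`, so
`E · exp(K · weight)` is nondecreasing and `E(s) ≤ e^{4K} E(t)` uniformly in `t`.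
-/

open Real Set

theorem monotoneOn_mul_exp_of_deriv_add_mul_nonneg {E E' G G' : ℝ → ℝ} {a b : ℝ}
    (hE : ∀ x ∈ Icc a b, HasDerivAt E (E' x) x) (hG : ∀ x ∈ Icc a b, HasDerivAt G (G' x) x)
    (h : ∀ x ∈ Ioo a b, 0 ≤ E' x + G' x * E x) :
    MonotoneOn (fun x => E x * exp (G x)) (Icc a b) := by
  have hF : ∀ x ∈ Icc a b, HasDerivAt (fun x => E x * exp (G x))
      ((E' x + G' x * E x) * exp (G x)) x := fun x hx =>
    ((hE x hx).mul (hG x hx).exp).congr_deriv (by ring)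
  refine monotoneOn_of_hasDerivWithinAt_nonneg (f' := fun x => (E' x + G' x * E x) * exp (G x))
    (convex_Icc a b)
    (fun x hx => (hF x hx).continuousAt.continuousWithinAt) (fun x hx => ?_) (fun x hx => ?_)
  all_goals rw [interior_Icc] at hx
  · exact (hF x (Ioo_subset_Icc_self hx)).hasDerivWithinAt
  · exact mul_nonneg (h x hx) (exp_pos _).le

theorem le_exp_mul_of_deriv_add_mul_nonneg {E E' G G' : ℝ → ℝ} {a b M : ℝ}
    (hE : ∀ x ∈ Icc a b, HasDerivAt E (E' x) x) (hG : ∀ x ∈ Icc a b, HasDerivAt G (G' x) x)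
    (h : ∀ x ∈ Ioo a b, 0 ≤ E' x + G' x * E x) (hM : ∀ x ∈ Icc a b, G b - G x ≤ M)
    (hEb : 0 ≤ E b) {s : ℝ} (hs : s ∈ Icc a b) : E s ≤ exp M * E b := by
  have hmono := monotoneOn_mul_exp_of_deriv_add_mul_nonneg hE hG h hs
    (right_mem_Icc.2 (hs.1.trans hs.2)) hs.2
  calc E s = E s * exp (G s) * exp (-G s) := by rw [mul_assoc, ← exp_add]; simp
    _ ≤ E b * exp (G b) * exp (-G s) := by gcongr
    _ = exp (G b - G s) * E b := by rw [mul_assoc, ← exp_add]; ring_nf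
    _ ≤ exp M * E b := by gcongr; exact hM s hs

theorem neg_mul_le_two_mul_mul {B β P Q : ℝ} (hB : |B| ≤ β) :
    -(β * (P ^ 2 + Q ^ 2)) ≤ 2 * B * (P * Q) := by
  have hPQ : 2 * |P * Q| ≤ P ^ 2 + Q ^ 2 := by
    simpa [abs_mul, sq_abs, mul_assoc] using two_mul_le_add_sq |P| |Q|
  calc -(β * (P ^ 2 + Q ^ 2)) ≤ -(|B| * (2 * |P * Q|)) := by
        have := (abs_nonneg B).trans hB
        gcongr
    _ = -|2 * B * (P * Q)| := by rw [abs_mul (2 * B), abs_mul 2, abs_two]; ring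
    _ ≤ 2 * B * (P * Q) := neg_abs_le _

theorem neg_mul_le_energy_rate {σ A B Cc D α β γ δ P Q : ℝ} (hσ : 0 ≤ σ)
    (hA : |A| ≤ α) (hB : |B| ≤ β) (hCc : |Cc| ≤ γ) (hD : |D| ≤ δ) :
    -((2 * α + β + γ + 2 * δ) * (P ^ 2 + Q ^ 2)) ≤
      2 * P * (σ * P + A * P + B * Q) + 2 * Q * (Cc * P + D * Q) := by
  have hAP : -α * P ^ 2 ≤ A * P ^ 2 :=
    mul_le_mul_of_nonneg_right (neg_le_of_abs_le hA) (sq_nonneg P)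
  have hDQ : -δ * Q ^ 2 ≤ D * Q ^ 2 :=
    mul_le_mul_of_nonneg_right (neg_le_of_abs_le hD) (sq_nonneg Q)
  have hcross := neg_mul_le_two_mul_mul (P := P) (Q := Q)
    ((abs_add_le B Cc).trans (add_le_add hB hCc))
  have hα : 0 ≤ α * Q ^ 2 := mul_nonneg ((abs_nonneg A).trans hA) (sq_nonneg Q)
  have hδ : 0 ≤ δ * P ^ 2 := mul_nonneg ((abs_nonneg D).trans hD) (sq_nonneg P)
  linarith [mul_nonneg hσ (sq_nonneg P)]

theorem sq_log_le_sixteen_mul_rpow {x : ℝ} (hx : 1 ≤ x) : log x ^ 2 ≤ 16 * x ^ (1 / 2 : ℝ) := by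
  have h := log_le_rpow_div (x := x) (by linarith) (by norm_num : (0 : ℝ) < 1 / 4)
  have h0 := log_nonneg hx
  calc log x ^ 2 ≤ (x ^ (1 / 4 : ℝ) / (1 / 4)) ^ 2 := by gcongr
    _ = 16 * x ^ (1 / 2 : ℝ) := by
      rw [div_pow, ← rpow_natCast, ← rpow_mul (by linarith)]; norm_num; ring

theorem rpow_neg_two_mul_sq_log_le {x : ℝ} (hx : 1 ≤ x) :
    x ^ (-(2 : ℝ)) * log x ^ 2 ≤ 16 * x ^ (-(3 : ℝ) / 2) := by
  have hx0 : 0 < x := by linarith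
  calc x ^ (-(2 : ℝ)) * log x ^ 2 ≤ x ^ (-(2 : ℝ)) * (16 * x ^ (1 / 2 : ℝ)) := by
        gcongr; exact sq_log_le_sixteen_mul_rpow hx
    _ = 16 * x ^ (-(3 : ℝ) / 2) := by rw [mul_left_comm, ← rpow_add hx0]; norm_num

noncomputable def energyWeight (y : ℝ) : ℝ := -(2 * y ^ (-(1 : ℝ) / 2) + (log y)⁻¹)

theorem hasDerivAt_energyWeight {y : ℝ} (hy : 1 < y) :
    HasDerivAt energyWeight (y ^ (-(3 : ℝ) / 2) + y⁻¹ * (log y ^ 2)⁻¹) y := by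
  have hy0 : y ≠ 0 := by positivity
  have hlog : log y ≠ 0 := (log_pos hy).ne'
  have := (((hasDerivAt_rpow_const (p := -(1 : ℝ) / 2) (Or.inl hy0)).const_mul 2).add
    ((hasDerivAt_log hy0).inv hlog)).neg
  refine this.congr_deriv ?_
  norm_num
  ring

theorem energyWeight_mem_Icc {y : ℝ} (hy : 2 ≤ y) : energyWeight y ∈ Icc (-4) 0 := by
  have hrpow : y ^ (-(1 : ℝ) / 2) ≤ 1 := rpow_le_one_of_one_le_of_nonpos (by linarith) (by norm_num)
  have hlog : 1 / 2 < log y := by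
    linarith [log_le_log (by norm_num) hy, log_two_gt_d9]
  have hinv : (log y)⁻¹ ≤ 2 := by
    rw [inv_le_comm₀ (by linarith) (by norm_num)]; linarith
  have : 0 ≤ y ^ (-(1 : ℝ) / 2) := by positivity
  have : 0 ≤ (log y)⁻¹ := by positivity
  constructor <;> unfold energyWeight <;> linarith

theorem jacobi_energy_rate_add_nonneg {C x A B Cc D P Q : ℝ} (hC : 0 ≤ C) (hx : 2 ≤ x)
    (hA : |A| ≤ C * x ^ (-(2 : ℝ))) (hB : |B| ≤ C * x ^ (-(2 : ℝ)) * log x ^ 2)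
    (hCc : |Cc| ≤ C * x⁻¹ * (log x ^ 2)⁻¹) (hD : |D| ≤ C * x ^ (-(3 : ℝ) / 2)) :
    0 ≤ 2 * P * (2 / (x * log x) * P + A * P + B * Q) + 2 * Q * (Cc * P + D * Q) +
      20 * C * (x ^ (-(3 : ℝ) / 2) + x⁻¹ * (log x ^ 2)⁻¹) * (P ^ 2 + Q ^ 2) := by
  have hx1 : 1 ≤ x := by linarith
  have hσ : 0 ≤ 2 / (x * log x) := by have := log_nonneg hx1; positivity
  have hrate := neg_mul_le_energy_rate (P := P) (Q := Q) hσ hA hB hCc hD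
  have hα : C * x ^ (-(2 : ℝ)) ≤ C * x ^ (-(3 : ℝ) / 2) :=
    mul_le_mul_of_nonneg_left (rpow_le_rpow_of_exponent_le hx1 (by norm_num)) hC
  have hβ : C * x ^ (-(2 : ℝ)) * log x ^ 2 ≤ C * (16 * x ^ (-(3 : ℝ) / 2)) := by
    rw [mul_assoc]; exact mul_le_mul_of_nonneg_left (rpow_neg_two_mul_sq_log_le hx1) hC
  have hγ : 0 ≤ C * x⁻¹ * (log x ^ 2)⁻¹ := by positivity
  have hweight : 2 * (C * x ^ (-(2 : ℝ))) + C * x ^ (-(2 : ℝ)) * log x ^ 2 +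
      C * x⁻¹ * (log x ^ 2)⁻¹ + 2 * (C * x ^ (-(3 : ℝ) / 2)) ≤
      20 * C * (x ^ (-(3 : ℝ) / 2) + x⁻¹ * (log x ^ 2)⁻¹) := by
    linarith
  linarith [mul_le_mul_of_nonneg_right hweight (by positivity : 0 ≤ P ^ 2 + Q ^ 2)]

/-- Energy estimate for the rescaled Jacobi system: solutions of
`Ψ̂' = (2/(s ln s)) Ψ̂ + a Ψ̂ + b Ẑ`, `Ẑ' = c Ψ̂ + d Ẑ` with
`|a| ≤ C s⁻², |b| ≤ C s⁻² (ln s)², |c| ≤ C s⁻¹ (ln s)⁻², |d| ≤ C s^{-3/2}`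
satisfy `Ψ̂(s)² + Ẑ(s)² ≤ C' (Ψ̂(t)² + Ẑ(t)²)` with `C'` independent of `t`. -/
theorem stmt10 (t₁ C : ℝ) (ht₁ : 2 ≤ t₁) (hC : 0 < C) :
    ∃ C' > 0, ∀ t, t₁ ≤ t → ∀ Ψ Z a b c d : ℝ → ℝ,
      (∀ s ∈ Set.Icc t₁ t, |a s| ≤ C * s ^ (-(2 : ℝ))) →
      (∀ s ∈ Set.Icc t₁ t, |b s| ≤ C * s ^ (-(2 : ℝ)) * Real.log s ^ 2) →
      (∀ s ∈ Set.Icc t₁ t, |c s| ≤ C * s⁻¹ * (Real.log s ^ 2)⁻¹) →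
      (∀ s ∈ Set.Icc t₁ t, |d s| ≤ C * s ^ (-(3 : ℝ) / 2)) →
      (∀ s ∈ Set.Icc t₁ t,
        HasDerivAt Ψ ((2 / (s * Real.log s)) * Ψ s + a s * Ψ s + b s * Z s) s) →
      (∀ s ∈ Set.Icc t₁ t, HasDerivAt Z (c s * Ψ s + d s * Z s) s) →
      ∀ s ∈ Set.Icc t₁ t, Ψ s ^ 2 + Z s ^ 2 ≤ C' * (Ψ t ^ 2 + Z t ^ 2) := by
  refine ⟨exp (80 * C), exp_pos _, fun t _ Ψ Z a b c d ha hb hc hd hΨ hZ s hs => ?_⟩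
  have two_le : ∀ x ∈ Icc t₁ t, 2 ≤ x := fun x hx => ht₁.trans hx.1
  refine le_exp_mul_of_deriv_add_mul_nonneg (G := fun y => 20 * C * energyWeight y)
    (fun x hx => ((hΨ x hx).pow 2).add ((hZ x hx).pow 2))
    (fun x hx => (hasDerivAt_energyWeight (by linarith [two_le x hx])).const_mul (20 * C))
    (fun x hx => ?_) (fun x hx => ?_) (add_nonneg (sq_nonneg _) (sq_nonneg _)) hs
  · have hx := Ioo_subset_Icc_self hx
    have := jacobi_energy_rate_add_nonneg (P := Ψ x) (Q := Z x) hC.le (two_le x hx)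
      (ha x hx) (hb x hx) (hc x hx) (hd x hx)
    simpa using this
  · have hwx := energyWeight_mem_Icc (two_le x hx)
    have hwt := energyWeight_mem_Icc (two_le t (right_mem_Icc.2 (hs.1.trans hs.2)))
    have := mul_le_mul_of_nonneg_left (show energyWeight t - energyWeight x ≤ 4 by
      linarith [hwx.1, hwt.2]) (by positivity : (0 : ℝ) ≤ 20 * C)
    linarith
end

section
/- Let t₁ ≥ 2 and suppose ḡ : [t₁,∞) × T³ → (symmetric positive definite 3×3 matrices) is a family of Riemannian metrics on the 3-torus whose components with respect to fixed coordinates satisfy |ḡ_{ij}(t,x̄) t^{-1} - ḡ_{∞,ij}(x̄)| ≤ C t^{-1} for a fixed Riemannian metric ḡ_∞. Let γ̄ : [t₁,∞) → T³ be a curve with ḡ_{ij}(t,γ̄(t)) γ̄'ⁱ(t) γ̄'ʲ(t) ≤ K² t^{-2} for all t ≥ t₁ and some K > 0. Then γ̄(t) converges to a point x̄₀ ∈ T³ as t → ∞, and d_∞(γ̄(t), x̄₀) ≤ C' t^{-1/2} for all t ≥ t₁, where d_∞ is the distance function of ḡ_∞ and C' depends only on C, K, ḡ_∞. -/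
/-!
Comparing `ḡ/t` with the uniformly elliptic `ḡ_∞` entrywise, the speed bound
`ḡ(γ̄', γ̄') ≤ K² t⁻²` becomes `m ‖γ̄'‖² ≤ K² t⁻³ + 3 C t⁻¹ ‖γ̄'‖²`; once `t ≥ 6C/m` the error term
is absorbed, so `‖γ̄'‖ ≲ t^{-3/2}`. This is integrable, hence `γ̄(u) - γ̄(s)` is bounded by the
tail `∫_s^∞ r^{-3/2} dr ≈ s^{-1/2}`: the curve is Cauchy at infinity and converges at rate
`t^{-1/2}`. On the compact interval `[t₁, 6C/m]` the distance to the limit is simply bounded.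
-/

open Filter Topology Set

theorem sum_mul_mul_le_add_norm_sq {n : ℕ} (A B : Matrix (Fin n) (Fin n) ℝ) {ε : ℝ}
    (hAB : ∀ i j, |A i j - B i j| ≤ ε) (v : EuclideanSpace ℝ (Fin n)) :
    ∑ i, ∑ j, A i j * v i * v j ≤ ∑ i, ∑ j, B i j * v i * v j + ε * n * ‖v‖ ^ 2 := by
  have hterm : ∀ i j, A i j * v i * v j ≤ B i j * v i * v j + ε * (v i ^ 2 + v j ^ 2) / 2 := by
    intro i j
    have hε : 0 ≤ ε := (abs_nonneg _).trans (hAB i j)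
    have hprod : |v i * v j| ≤ (v i ^ 2 + v j ^ 2) / 2 := by
      rw [abs_mul]; nlinarith [sq_nonneg (|v i| - |v j|), sq_abs (v i), sq_abs (v j)]
    have : (A i j - B i j) * (v i * v j) ≤ ε * ((v i ^ 2 + v j ^ 2) / 2) :=
      calc (A i j - B i j) * (v i * v j) ≤ |A i j - B i j| * |v i * v j| := by
            rw [← abs_mul]; exact le_abs_self _
        _ ≤ ε * ((v i ^ 2 + v j ^ 2) / 2) := mul_le_mul (hAB i j) hprod (abs_nonneg _) hε
    linarith
  calc ∑ i, ∑ j, A i j * v i * v j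
      ≤ ∑ i, ∑ j, (B i j * v i * v j + ε * (v i ^ 2 + v j ^ 2) / 2) :=
        Finset.sum_le_sum fun i _ => Finset.sum_le_sum fun j _ => hterm i j
    _ = ∑ i, ∑ j, B i j * v i * v j + ε * n * ‖v‖ ^ 2 := by
        simp only [Finset.sum_add_distrib, EuclideanSpace.real_norm_sq_eq, add_div, mul_add,
          ← Finset.sum_div, ← Finset.mul_sum, Finset.sum_const, Finset.card_univ,
          Fintype.card_fin, nsmul_eq_mul]
        ring

theorem norm_le_of_sum_mul_mul_le {n : ℕ} {A B : Matrix (Fin n) (Fin n) ℝ}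
    {v : EuclideanSpace ℝ (Fin n)} {t m C K : ℝ} (ht : 0 < t) (hm : 0 < m)
    (hAB : ∀ i j, |A i j * t⁻¹ - B i j| ≤ C * t⁻¹)
    (hB : m * ‖v‖ ^ 2 ≤ ∑ i, ∑ j, B i j * v i * v j)
    (hA : ∑ i, ∑ j, A i j * v i * v j ≤ K ^ 2 * t ^ (-(2 : ℝ)))
    (hlarge : 2 * n * C ≤ m * t) :
    ‖v‖ ≤ √(2 * K ^ 2 / m) * t ^ (-(3 : ℝ) / 2) := by
  have hcmp := sum_mul_mul_le_add_norm_sq B (fun i j => A i j * t⁻¹)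
    (fun i j => by rw [abs_sub_comm]; exact hAB i j) v
  have hscale : ∑ i, ∑ j, A i j * t⁻¹ * v i * v j = t⁻¹ * ∑ i, ∑ j, A i j * v i * v j := by
    rw [Finset.mul_sum]
    refine Finset.sum_congr rfl fun i _ => ?_
    rw [Finset.mul_sum]
    exact Finset.sum_congr rfl fun j _ => by ring
  have hpow : t⁻¹ * t ^ (-(2 : ℝ)) = t ^ (-(3 : ℝ)) := by
    rw [← Real.rpow_neg_one, ← Real.rpow_add ht]; norm_num
  have hsmall : C * t⁻¹ * n ≤ m / 2 := by
    rw [mul_right_comm, ← div_eq_mul_inv, div_le_iff₀ ht]; linarith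
  have hsq : ‖v‖ ^ 2 ≤ 2 * K ^ 2 / m * t ^ (-(3 : ℝ)) := by
    rw [div_mul_eq_mul_div, le_div_iff₀ hm]
    have hA' := mul_le_mul_of_nonneg_left hA (inv_nonneg.2 ht.le)
    nlinarith [mul_le_mul_of_nonneg_right hsmall (sq_nonneg ‖v‖)]
  calc ‖v‖ = √(‖v‖ ^ 2) := (Real.sqrt_sq (norm_nonneg v)).symm
    _ ≤ √(2 * K ^ 2 / m * t ^ (-(3 : ℝ))) := Real.sqrt_le_sqrt hsq
    _ = √(2 * K ^ 2 / m) * t ^ (-(3 : ℝ) / 2) := by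
        rw [Real.sqrt_mul (by positivity), Real.sqrt_eq_rpow (t ^ _), ← Real.rpow_mul ht.le]
        norm_num

theorem norm_sub_le_of_norm_deriv_le_rpow {E : Type*} [NormedAddCommGroup E] [NormedSpace ℝ E]
    {f : ℝ → E} {T A p : ℝ} (hT : 0 < T) (hp : 0 < p)
    (hf : ∀ t, T ≤ t → DifferentiableAt ℝ f t)
    (hf' : ∀ t, T ≤ t → ‖deriv f t‖ ≤ A * t ^ (-p - 1)) {s u : ℝ} (hs : T ≤ s) (hsu : s ≤ u) :
    ‖f u - f s‖ ≤ A / p * (s ^ (-p) - u ^ (-p)) := by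
  have hB : ∀ r, 0 < r →
      HasDerivAt (fun r => A / p * (s ^ (-p) - r ^ (-p))) (A * r ^ (-p - 1)) r := by
    intro r hr
    refine (((hasDerivAt_const r (s ^ (-p))).sub
      (Real.hasDerivAt_rpow_const (p := -p) (Or.inl hr.ne'))).const_mul (A / p)).congr_deriv ?_
    rw [zero_sub, neg_mul, neg_neg, ← mul_assoc, div_mul_cancel₀ A hp.ne']
  have hpos : ∀ r ∈ Icc s u, 0 < r := fun r hr => hT.trans_le (hs.trans hr.1)
  have hdiff : ∀ r ∈ Icc s u, DifferentiableAt ℝ f r := fun r hr => hf r (hs.trans hr.1)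
  exact image_norm_le_of_norm_deriv_right_le_deriv_boundary' (f := fun r => f r - f s)
    (fun r hr => ((hdiff r hr).continuousAt.sub continuousAt_const).continuousWithinAt)
    (fun r hr => ((hdiff r (Ico_subset_Icc_self hr)).hasDerivAt.sub_const (f s)).hasDerivWithinAt)
    (by simp) (fun r hr => (hB r (hpos r hr)).continuousAt.continuousWithinAt)
    (fun r hr => (hB r (hpos r (Ico_subset_Icc_self hr))).hasDerivWithinAt)
    (fun r hr => hf' r (hs.trans hr.1)) ⟨hsu, le_rfl⟩

theorem exists_tendsto_dist_le_of_dist_le {α : Type*} [PseudoMetricSpace α] [CompleteSpace α]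
    {f : ℝ → α} {b : ℝ → ℝ} {T : ℝ} (hb : Tendsto b atTop (𝓝 0))
    (h : ∀ s u, T ≤ s → s ≤ u → dist (f s) (f u) ≤ b s) :
    ∃ x₀, Tendsto f atTop (𝓝 x₀) ∧ ∀ t, T ≤ t → dist (f t) x₀ ≤ b t := by
  have hcauchy : CauchySeq f := Metric.cauchySeq_iff'.2 fun ε hε => by
    obtain ⟨N, hN⟩ := ((hb.eventually (gt_mem_nhds hε)).and (eventually_ge_atTop T)).exists
    exact ⟨N, fun u hu => (dist_comm _ _).trans_lt ((h N u hN.2 hu).trans_lt hN.1)⟩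
  obtain ⟨x₀, hx₀⟩ := cauchySeq_tendsto_of_complete hcauchy
  exact ⟨x₀, hx₀, fun t ht => le_of_tendsto (tendsto_const_nhds.dist hx₀)
    ((eventually_ge_atTop t).mono fun u hu => h t u ht hu)⟩

theorem exists_tendsto_dist_le_of_norm_deriv_le_rpow {E : Type*} [NormedAddCommGroup E]
    [NormedSpace ℝ E] [CompleteSpace E] {f : ℝ → E} {T A p : ℝ} (hT : 0 < T) (hp : 0 < p)
    (hf : ∀ t, T ≤ t → DifferentiableAt ℝ f t)
    (hf' : ∀ t, T ≤ t → ‖deriv f t‖ ≤ A * t ^ (-p - 1)) :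
    ∃ x₀, Tendsto f atTop (𝓝 x₀) ∧ ∀ t, T ≤ t → dist (f t) x₀ ≤ A / p * t ^ (-p) := by
  refine exists_tendsto_dist_le_of_dist_le
    (by simpa using (tendsto_rpow_neg_atTop hp).const_mul (A / p)) fun s u hs hsu => ?_
  have hA : 0 ≤ A := by
    exact nonneg_of_mul_nonneg_left ((norm_nonneg _).trans (hf' s hs))
      (Real.rpow_pos_of_pos (hT.trans_le hs) _)
  have hu : 0 ≤ u ^ (-p) := Real.rpow_nonneg (hT.le.trans (hs.trans hsu)) _
  rw [dist_comm, dist_eq_norm]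
  refine (norm_sub_le_of_norm_deriv_le_rpow hT hp hf hf' hs hsu).trans ?_
  gcongr
  linarith

theorem exists_forall_le_mul_rpow {φ : ℝ → ℝ} {t₁ T c p : ℝ} (ht₁ : 0 < t₁)
    (hφ : ContinuousOn φ (Icc t₁ T)) (hT : ∀ t, T ≤ t → φ t ≤ c * t ^ p) :
    ∃ C' > 0, ∀ t, t₁ ≤ t → φ t ≤ C' * t ^ p := by
  have hcont : ContinuousOn (fun t => φ t / t ^ p) (Icc t₁ T) :=
    hφ.div (fun t ht => (Real.continuousAt_rpow_const t p
      (Or.inl (ht₁.trans_le ht.1).ne')).continuousWithinAt)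
      fun t ht => (Real.rpow_pos_of_pos (ht₁.trans_le ht.1) p).ne'
  obtain ⟨B, hB⟩ := isCompact_Icc.bddAbove_image hcont
  refine ⟨max 1 (max B c), by positivity, fun t ht => ?_⟩
  have htp : 0 < t ^ p := Real.rpow_pos_of_pos (ht₁.trans_le ht) p
  rcases le_total t T with htT | hTt
  · have : φ t / t ^ p ≤ B := hB ⟨t, ⟨ht, htT⟩, rfl⟩
    rw [div_le_iff₀ htp] at this
    exact this.trans (mul_le_mul_of_nonneg_right (by simp) htp.le)
  · exact (hT t hTt).trans (mul_le_mul_of_nonneg_right (by simp) htp.le)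

theorem stmt15_general (t₁ C K m M : ℝ) (ht₁ : 2 ≤ t₁)
    (hm : 0 < m) (hM : 0 < M)
    (g : ℝ → EuclideanSpace ℝ (Fin 3) → Matrix (Fin 3) (Fin 3) ℝ)
    (ginf : EuclideanSpace ℝ (Fin 3) → Matrix (Fin 3) (Fin 3) ℝ)
    (dinf : EuclideanSpace ℝ (Fin 3) → EuclideanSpace ℝ (Fin 3) → ℝ)
    (γ : ℝ → EuclideanSpace ℝ (Fin 3))
    (hdiff : ∀ t, t₁ ≤ t → DifferentiableAt ℝ γ t)
    (hcomp : ∀ t, t₁ ≤ t → ∀ x, ∀ i j, |g t x i j * t⁻¹ - ginf x i j| ≤ C * t⁻¹)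
    (hell : ∀ x (v : EuclideanSpace ℝ (Fin 3)),
      m * ‖v‖ ^ 2 ≤ ∑ i, ∑ j, ginf x i j * v i * v j)
    (hdmetric : ∀ x y, dinf x y ≤ M * ‖x - y‖)
    (hspeed : ∀ t, t₁ ≤ t →
      ∑ i, ∑ j, g t (γ t) i j * deriv γ t i * deriv γ t j ≤ K ^ 2 * t ^ (-(2 : ℝ))) :
    ∃ x₀, Filter.Tendsto γ Filter.atTop (nhds x₀) ∧
      ∃ C' > 0, ∀ t, t₁ ≤ t → dinf (γ t) x₀ ≤ C' * t ^ (-(1 : ℝ) / 2) := by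
  simp only [neg_div]
  set T₀ := max t₁ (6 * C / m)
  set A := √(2 * K ^ 2 / m)
  have hT₀ : 0 < T₀ := (by linarith : (0 : ℝ) < t₁).trans_le (le_max_left _ _)
  have hspeed' : ∀ t, T₀ ≤ t → ‖deriv γ t‖ ≤ A * t ^ (-(1 / 2 : ℝ) - 1) := by
    intro t ht
    have ht₁t : t₁ ≤ t := (le_max_left _ _).trans ht
    have hlarge : 2 * ((3 : ℕ) : ℝ) * C ≤ m * t := by
      have := (le_max_right _ _).trans ht
      rw [div_le_iff₀ hm] at this
      push_cast; linarith
    convert norm_le_of_sum_mul_mul_le (hT₀.trans_le ht) hm (hcomp t ht₁t (γ t)) (hell (γ t) _)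
      (hspeed t ht₁t) hlarge using 3
    norm_num
  obtain ⟨x₀, hlim, hrate⟩ := exists_tendsto_dist_le_of_norm_deriv_le_rpow hT₀
    (by norm_num : (0 : ℝ) < 1 / 2) (fun t ht => hdiff t ((le_max_left _ _).trans ht)) hspeed'
  obtain ⟨C', hC', hbound⟩ := exists_forall_le_mul_rpow (φ := fun t => M * dist (γ t) x₀)
    (by linarith : (0 : ℝ) < t₁)
    (fun t ht => (continuousAt_const.mul
      ((hdiff t ht.1).continuousAt.dist continuousAt_const)).continuousWithinAt)
    (fun t ht => (mul_le_mul_of_nonneg_left (hrate t ht) hM.le).trans_eq (mul_assoc _ _ _).symm)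
  exact ⟨x₀, hlim, C', hC', fun t ht =>
    (hdmetric _ _).trans (by simpa [dist_eq_norm] using hbound t ht)⟩

/-- Asymptotic silence: if the family of metrics `ḡ(t,·)` satisfies
`|t⁻¹ ḡ_{ij} - ḡ_{∞,ij}| ≤ C t⁻¹` for a uniformly elliptic limit metric `ḡ_∞`
(whose distance function `d_∞` is dominated by the coordinate distance), and the
curve `γ̄` satisfies `ḡ_{ij} γ̄'ⁱ γ̄'ʲ ≤ K² t⁻²`, then `γ̄(t)` converges to a
point `x̄₀` with `d_∞(γ̄(t), x̄₀) ≤ C' t^{-1/2}`. -/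
theorem stmt15 (t₁ C K m M : ℝ) (ht₁ : 2 ≤ t₁) (hC : 0 < C) (hK : 0 < K)
    (hm : 0 < m) (hM : 0 < M)
    (g : ℝ → EuclideanSpace ℝ (Fin 3) → Matrix (Fin 3) (Fin 3) ℝ)
    (ginf : EuclideanSpace ℝ (Fin 3) → Matrix (Fin 3) (Fin 3) ℝ)
    (dinf : EuclideanSpace ℝ (Fin 3) → EuclideanSpace ℝ (Fin 3) → ℝ)
    (γ : ℝ → EuclideanSpace ℝ (Fin 3))
    (hdiff : ∀ t, t₁ ≤ t → DifferentiableAt ℝ γ t)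
    (hcomp : ∀ t, t₁ ≤ t → ∀ x, ∀ i j, |g t x i j * t⁻¹ - ginf x i j| ≤ C * t⁻¹)
    (hell : ∀ x (v : EuclideanSpace ℝ (Fin 3)),
      m * ‖v‖ ^ 2 ≤ ∑ i, ∑ j, ginf x i j * v i * v j)
    (hdmetric : ∀ x y, dinf x y ≤ M * ‖x - y‖)
    (hspeed : ∀ t, t₁ ≤ t →
      ∑ i, ∑ j, g t (γ t) i j * deriv γ t i * deriv γ t j ≤ K ^ 2 * t ^ (-(2 : ℝ))) :
    ∃ x₀, Filter.Tendsto γ Filter.atTop (nhds x₀) ∧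
      ∃ C' > 0, ∀ t, t₁ ≤ t → dinf (γ t) x₀ ≤ C' * t ^ (-(1 : ℝ) / 2) :=
  stmt15_general t₁ C K m M ht₁ hm hM g ginf dinf γ hdiff hcomp hell hdmetric hspeed
end

section
/- Let t₁ ≥ 2 and suppose h, ĥ : [t₁,∞) → ℝ are differentiable, with ĥ(t) = h(t) + 3 ln t - c for a constant c, and suppose ⟨ĥ'⟩(t) = (3/t)(1 - e^{⟨ĥ⟩(t)/2}) + O(t^{a-2}) for some a < 1, where ⟨ĥ⟩ is bounded and converges to 0 as t → ∞. Then for every b with 0 < b < min(1-a, 1/2) there is C_b such that |⟨ĥ⟩(t)| ≤ C_b t^{-b} for all t ≥ t₁. -/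
/-!
Put `E t = (t ^ b * g t) ^ 2`. Once `|g| ≤ 1`, the drift satisfies `g (1 - e^{g/2}) ≤ -g²/4`,
so `t g g' ≤ -3g²/4 + C t^{a-1} |g|`. Where `E ≥ 1` we have `|g| ≥ t^{-b}`, and since
`t^{a-1} = o(t^{-b})` the error is at most `g²/4` for large `t`; then
`E' = 2 t^{2b-1} (b g² + t g g') ≤ 2 t^{2b-1} (b - 1/2) g² ≤ 0` because `b < 1/2`.
Hence `E` never rises above `max (E T) 1`, i.e. `|g t| ≤ C t^{-b}` for large `t`, and the
boundedness of `g` covers the remaining compact range.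
-/

open Real Filter

lemma mul_one_sub_exp_half_le {x : ℝ} (hx : |x| ≤ 1) :
    x * (1 - exp (x / 2)) ≤ -x ^ 2 / 4 := by
  rcases abs_le.mp hx with ⟨hx₁, hx₂⟩
  rcases le_total 0 x with hx₀ | hx₀
  · nlinarith [add_one_le_exp (x / 2)]
  · -- `exp (x/2) ≤ 1 / (1 - x/2) ≤ 1 + x/4` on `[-1, 0]`
    have hpos := exp_pos (x / 2)
    have hinv : exp (x / 2) * exp (-(x / 2)) = 1 := by rw [← exp_add]; simp
    have hle : exp (x / 2) ≤ 1 + x / 4 := by nlinarith [add_one_le_exp (-(x / 2))]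
    nlinarith

lemma le_max_of_hasDerivAt_nonpos_of_le {E E' : ℝ → ℝ} {T c : ℝ}
    (hE : ∀ t, T ≤ t → HasDerivAt E (E' t) t) (hE' : ∀ t, T ≤ t → c ≤ E t → E' t ≤ 0)
    {t : ℝ} (ht : T ≤ t) : E t ≤ max (E T) c := by
  set m := max (E T) c
  -- fence `E` by the lines `m + ε (s - T)`, whose slope beats `E'` where they touch
  have hfence : ∀ ε > 0, E t ≤ m + ε * (t - T) := by
    intro ε hε
    refine image_le_of_deriv_right_lt_deriv_boundary (a := T) (b := t)
      (B := fun s => m + ε * (s - T)) (B' := fun _ => ε)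
      (fun s hs => (hE s hs.1).continuousAt.continuousWithinAt)
      (fun s hs => (hE s hs.1).hasDerivWithinAt) (by simp [m])
      (fun s => ((hasDerivAt_id s).sub_const T |>.const_mul ε |>.const_add m).congr_deriv
        (by simp)) ?_ ⟨ht, le_rfl⟩
    intro s hs hEs
    have : c ≤ E s := by rw [hEs]; nlinarith [le_max_right (E T) c, hs.1]
    linarith [hE' s hs.1 this]
  refine le_of_forall_pos_le_add fun δ hδ => ?_
  have hε : 0 < δ / (t - T + 1) := div_pos hδ (by linarith)
  calc E t ≤ m + δ / (t - T + 1) * (t - T) := hfence _ hε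
    _ ≤ m + δ := by
      gcongr
      rw [div_mul_eq_mul_div, div_le_iff₀ (by linarith)]
      nlinarith

lemma mul_mul_le_neg_sq_div_two {t x y δ : ℝ} (ht : 0 < t) (hx : |x| ≤ 1)
    (hy : |y - 3 / t * (1 - exp (x / 2))| ≤ δ) (hδ : 4 * (t * δ) ≤ |x|) :
    t * (x * y) ≤ -x ^ 2 / 2 := by
  have hdrift := mul_one_sub_exp_half_le hx
  have herr : x * (y - 3 / t * (1 - exp (x / 2))) ≤ |x| * δ := by
    calc _ ≤ |x * (y - 3 / t * (1 - exp (x / 2)))| := le_abs_self _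
      _ ≤ |x| * δ := by rw [abs_mul]; exact mul_le_mul_of_nonneg_left hy (abs_nonneg x)
  have hsplit : t * (x * y) =
      3 * (x * (1 - exp (x / 2))) + t * (x * (y - 3 / t * (1 - exp (x / 2)))) := by
    field_simp; ring
  have hsq : t * (|x| * δ) ≤ x ^ 2 / 4 := by
    nlinarith [abs_nonneg x, sq_abs x]
  nlinarith

lemma rpow_mul_mul_deriv_nonpos {t b x y : ℝ} (ht : 0 < t) (hb : b ≤ 1 / 2)
    (hxy : t * (x * y) ≤ -x ^ 2 / 2) :
    2 * (t ^ b * x) * (b * t ^ (b - 1) * x + t ^ b * y) ≤ 0 := by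
  have hsplit : 2 * (t ^ b * x) * (b * t ^ (b - 1) * x + t ^ b * y) =
      2 * t ^ b * t ^ (b - 1) * (b * x ^ 2 + t * (x * y)) := by
    rw [rpow_sub_one ht.ne']; field_simp
  rw [hsplit]
  have : 0 < 2 * t ^ b * t ^ (b - 1) := by positivity
  exact mul_nonpos_of_nonneg_of_nonpos this.le (by nlinarith [sq_nonneg x])

lemma rpow_neg_le_abs_of_one_le_sq {t b x : ℝ} (ht : 0 < t) (h : 1 ≤ (t ^ b * x) ^ 2) :
    t ^ (-b) ≤ |x| := by
  rw [one_le_sq_iff_one_le_abs, abs_mul, abs_of_pos (rpow_pos_of_pos ht b)] at h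
  rwa [rpow_neg ht.le, inv_le_iff_one_le_mul₀' (rpow_pos_of_pos ht b)]

lemma abs_le_sqrt_mul_rpow_neg_of_sq_le {t b x m : ℝ} (ht : 0 < t) (h : (t ^ b * x) ^ 2 ≤ m) :
    |x| ≤ √m * t ^ (-b) := by
  have := abs_le_sqrt h
  rw [abs_mul, abs_of_pos (rpow_pos_of_pos ht b)] at this
  rwa [rpow_neg ht.le, ← div_eq_mul_inv, le_div_iff₀' (rpow_pos_of_pos ht b)]

lemma eventually_mul_rpow_le_rpow {p q : ℝ} (hpq : p < q) (C : ℝ) :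
    ∀ᶠ t in atTop, C * t ^ p ≤ t ^ q := by
  have hlim : Tendsto (fun t : ℝ => C * t ^ (-(q - p))) atTop (nhds 0) := by
    simpa using (tendsto_rpow_neg_atTop (sub_pos.mpr hpq)).const_mul C
  filter_upwards [hlim.eventually_le_const one_pos, eventually_gt_atTop 0] with t hC ht
  calc C * t ^ p = C * t ^ (-(q - p)) * t ^ q := by
        rw [mul_assoc, ← rpow_add ht]; ring_nf
    _ ≤ 1 * t ^ q := by gcongr
    _ = t ^ q := one_mul _

lemma exists_abs_le_mul_rpow_neg {g : ℝ → ℝ} {t₁ b C M : ℝ} (ht₁ : 0 < t₁) (hb : 0 ≤ b)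
    (hM : ∀ t, t₁ ≤ t → |g t| ≤ M) (hC : ∀ᶠ t in atTop, |g t| ≤ C * t ^ (-b)) :
    ∃ C' > 0, ∀ t, t₁ ≤ t → |g t| ≤ C' * t ^ (-b) := by
  obtain ⟨T, hT⟩ := eventually_atTop.mp hC
  have hM₀ : 0 ≤ M := (abs_nonneg _).trans (hM t₁ le_rfl)
  refine ⟨max (max C (M * T ^ b)) 1, by positivity, fun t ht => ?_⟩
  have ht₀ : 0 < t := ht₁.trans_le ht
  rcases le_total T t with hTt | htT
  · calc |g t| ≤ C * t ^ (-b) := hT t hTt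
      _ ≤ _ := by gcongr; exact (le_max_left _ _).trans (le_max_left _ _)
  · have hratio : 1 ≤ T ^ b * t ^ (-b) := by
      rw [rpow_neg ht₀.le, ← div_eq_mul_inv, one_le_div (rpow_pos_of_pos ht₀ b)]
      exact rpow_le_rpow ht₀.le htT hb
    calc |g t| ≤ M * (T ^ b * t ^ (-b)) := by nlinarith [hM t ht]
      _ = M * T ^ b * t ^ (-b) := by ring
      _ ≤ _ := by gcongr; exact (le_max_right _ _).trans (le_max_left _ _)

theorem stmt17_general (t₁ a : ℝ) (ht₁ : 2 ≤ t₁) (g : ℝ → ℝ)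
    (hdiff : ∀ t, t₁ ≤ t → DifferentiableAt ℝ g t)
    (hbdd : ∃ M, ∀ t, t₁ ≤ t → |g t| ≤ M)
    (hlim : Filter.Tendsto g Filter.atTop (nhds 0))
    (herr : ∃ Ce > 0, ∀ t, t₁ ≤ t →
      |deriv g t - (3 / t) * (1 - Real.exp (g t / 2))| ≤ Ce * t ^ (a - 2)) :
    ∀ b : ℝ, 0 < b → b < min (1 - a) (1 / 2) →
      ∃ Cb > 0, ∀ t, t₁ ≤ t → |g t| ≤ Cb * t ^ (-b) := by
  intro b hb hbmin
  obtain ⟨M, hM⟩ := hbdd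
  obtain ⟨Ce, -, herr⟩ := herr
  have hsmall : ∀ᶠ t in atTop, |g t| ≤ 1 := by
    simpa using (hlim.abs.eventually_le_const (u := 1) (by simp))
  obtain ⟨T, hT⟩ := eventually_atTop.mp <| (eventually_ge_atTop t₁).and <|
    (eventually_gt_atTop 0).and <| hsmall.and <|
    eventually_mul_rpow_le_rpow (by linarith [min_le_left (1 - a) (1 / 2)] : a - 1 < -b) (4 * Ce)
  have hE : ∀ t, T ≤ t → HasDerivAt (fun s => (s ^ b * g s) ^ 2)
      (2 * (t ^ b * g t) * (b * t ^ (b - 1) * g t + t ^ b * deriv g t)) t := fun t ht =>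
    (((hasDerivAt_rpow_const (Or.inl (hT t ht).2.1.ne')).mul
      (hdiff t (hT t ht).1).hasDerivAt).pow 2).congr_deriv (by simp)
  have hE' : ∀ t, T ≤ t → 1 ≤ (t ^ b * g t) ^ 2 →
      2 * (t ^ b * g t) * (b * t ^ (b - 1) * g t + t ^ b * deriv g t) ≤ 0 := by
    intro t ht hEt
    obtain ⟨ht₁t, ht₀, hgt, hCe⟩ := hT t ht
    refine rpow_mul_mul_deriv_nonpos ht₀ (by linarith [min_le_right (1 - a) (1 / 2)])
      (mul_mul_le_neg_sq_div_two ht₀ hgt (herr t ht₁t) ?_)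
    calc 4 * (t * (Ce * t ^ (a - 2))) = 4 * Ce * t ^ (a - 1) := by
          rw [show a - 1 = (a - 2) + 1 by ring, rpow_add_one ht₀.ne']; ring
      _ ≤ t ^ (-b) := hCe
      _ ≤ |g t| := rpow_neg_le_abs_of_one_le_sq ht₀ hEt
  have hdecay : ∀ t, T ≤ t → |g t| ≤ √(max ((T ^ b * g T) ^ 2) 1) * t ^ (-b) := fun t ht =>
    abs_le_sqrt_mul_rpow_neg_of_sq_le (hT t ht).2.1 (le_max_of_hasDerivAt_nonpos_of_le hE hE' ht)
  exact exists_abs_le_mul_rpow_neg (by linarith) hb.le hM (eventually_atTop.mpr ⟨T, hdecay⟩)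

/-- Quantitative decay for the averaged quantity `g = ⟨λ̂⟩`: if `g` is bounded,
tends to `0`, and satisfies `g'(t) = (3/t)(1 - e^{g(t)/2}) + O(t^{a-2})` with
`a < 1`, then for every `0 < b < min (1-a) (1/2)` there is `C_b` with
`|g(t)| ≤ C_b t^{-b}`. -/
theorem stmt17 (t₁ a : ℝ) (ht₁ : 2 ≤ t₁) (ha : a < 1) (g : ℝ → ℝ)
    (hdiff : ∀ t, t₁ ≤ t → DifferentiableAt ℝ g t)
    (hbdd : ∃ M, ∀ t, t₁ ≤ t → |g t| ≤ M)
    (hlim : Filter.Tendsto g Filter.atTop (nhds 0))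
    (herr : ∃ Ce > 0, ∀ t, t₁ ≤ t →
      |deriv g t - (3 / t) * (1 - Real.exp (g t / 2))| ≤ Ce * t ^ (a - 2)) :
    ∀ b : ℝ, 0 < b → b < min (1 - a) (1 / 2) →
      ∃ Cb > 0, ∀ t, t₁ ≤ t → |g t| ≤ Cb * t ^ (-b) :=
  stmt17_general t₁ a ht₁ g hdiff hbdd hlim herr
end
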